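/- Let A be a real m×n matrix with no zero row, let b ∈ ℝ^m, and let x ∈ ℝⁿ. For each row index i with A A_{i,:}ᵀ ≠ 0, define the RKAS update x⁺(i) = x − α(i) A_{i,:}ᵀ with α(i) = ⟨A A_{i,:}ᵀ, A x − b⟩ / ‖A A_{i,:}ᵀ‖₂². If x − x̄ ∈ Range(Aᵀ), then the weighted average over a random row satisfies the one-step contraction ∑_{i=1}^m (‖A_{i,:}‖₂²/‖A‖_F²) · ‖A x⁺(i) − A x̄‖₂² ≤ (1 − σ_min(A)⁴/(‖A‖₂² ‖A‖_F²)) · ‖A x − A x̄‖₂². -/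

import Mathlib

open Matrix
open scoped RealInnerProductSpace

/-- `mulE A x` is the matrix-vector product `A x`, viewed as a map between
Euclidean spaces (so that `‖·‖` is the Euclidean norm and `⟪·,·⟫` the dot product). -/
noncomputable def mulE {m n : ℕ} (A : Matrix (Fin m) (Fin n) ℝ)
    (x : EuclideanSpace ℝ (Fin n)) : EuclideanSpace ℝ (Fin m) :=
  Matrix.toEuclideanLin A x

/-- `rowE A i` is the `i`-th row of `A` (i.e. the vector `A_{i,:}ᵀ`),
viewed as an element of Euclidean space. -/
noncomputable def rowE {m n : ℕ} (A : Matrix (Fin m) (Fin n) ℝ) (i : Fin m) :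
    EuclideanSpace ℝ (Fin n) :=
  (EuclideanSpace.equiv (Fin n) ℝ).symm (A i)

/-- One step of the RKAS method: `x⁺ = x − α A_{i,:}ᵀ` with the adaptive
stepsize `α = ⟨A A_{i,:}ᵀ, A x − b⟩ / ‖A A_{i,:}ᵀ‖²`. -/
noncomputable def rkasStep {m n : ℕ} (A : Matrix (Fin m) (Fin n) ℝ)
    (b : EuclideanSpace ℝ (Fin m)) (x : EuclideanSpace ℝ (Fin n)) (i : Fin m) :
    EuclideanSpace ℝ (Fin n) :=
  x - (⟪mulE A (rowE A i), mulE A x - b⟫ / ‖mulE A (rowE A i)‖ ^ 2) • rowE A i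

/-- `frobSq A = ‖A‖_F²`, the squared Frobenius norm of `A`. -/
noncomputable def frobSq {m n : ℕ} (A : Matrix (Fin m) (Fin n) ℝ) : ℝ :=
  ∑ i, ∑ j, A i j ^ 2

section helpers
variable {m n : ℕ} (A : Matrix (Fin m) (Fin n) ℝ)

lemma mulE_apply (x : EuclideanSpace ℝ (Fin n)) (i : Fin m) :
    mulE A x i = ∑ j, A i j * x j := by
  simp [mulE, Matrix.toEuclideanLin_apply, Matrix.mulVec, dotProduct]

lemma mulE_adj (u : EuclideanSpace ℝ (Fin n)) (v : EuclideanSpace ℝ (Fin m)) :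
    ⟪mulE A u, v⟫ = ⟪u, mulE Aᵀ v⟫ := by
  simp [mulE, Matrix.toEuclideanLin_apply, Matrix.mulVec, dotProduct,
    PiLp.inner_apply, RCLike.inner_apply, Finset.sum_mul, Finset.mul_sum]
  rw [Finset.sum_comm]
  congr 1; ext j; congr 1; ext i; ring

lemma rowE_apply (i : Fin m) (j : Fin n) : rowE A i j = A i j := rfl

lemma inner_rowE (i : Fin m) (w : EuclideanSpace ℝ (Fin n)) :
    ⟪rowE A i, w⟫ = mulE A w i := by
  simp [PiLp.inner_apply, RCLike.inner_apply, rowE_apply, mulE_apply]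
  exact Finset.sum_congr rfl fun j _ => mul_comm _ _

lemma rowE_mem (i : Fin m) : rowE A i ∈ Set.range (mulE Aᵀ) := by
  refine ⟨EuclideanSpace.single i 1, ?_⟩
  ext j
  simp [mulE_apply, rowE_apply, EuclideanSpace.single_apply]

lemma norm_sq_eq_sum {k : ℕ} (w : EuclideanSpace ℝ (Fin k)) : ‖w‖ ^ 2 = ∑ i, w i ^ 2 := by
  rw [← real_inner_self_eq_norm_sq]
  simp only [PiLp.inner_apply, RCLike.inner_apply, conj_trivial, pow_two]

lemma frobSq_eq : frobSq A = ∑ i, ‖rowE A i‖ ^ 2 := by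
  simp [frobSq, norm_sq_eq_sum, rowE_apply]

lemma mulE_sub_smul (c : ℝ) (p q : EuclideanSpace ℝ (Fin n)) :
    mulE A (p - c • q) = mulE A p - c • mulE A q := by
  show Matrix.toEuclideanLin A (p - c • q) = _
  rw [map_sub, LinearMap.map_smul]
  rfl

end helpers

set_option maxHeartbeats 1000000 in
/-- the one-step expected contraction of the RKAS method.
If `x − x̄ ∈ Range(Aᵀ)`, then
`∑_i (‖A_{i,:}‖²/‖A‖_F²) ‖A x⁺(i) − A x̄‖² ≤ (1 − σ_min(A)⁴/(‖A‖₂² ‖A‖_F²)) ‖A x − A x̄‖²`. -/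

theorem rkas_one_step_contraction (m n : ℕ) (A : Matrix (Fin m) (Fin n) ℝ)
    (hA : A ≠ 0) (hrows : ∀ i, A i ≠ 0)
    (b : EuclideanSpace ℝ (Fin m)) (x : EuclideanSpace ℝ (Fin n))
    -- `x̄ = A†b`: the unique vector in `Range(Aᵀ)` satisfying `Aᵀ A x̄ = Aᵀ b`
    (xbar : EuclideanSpace ℝ (Fin n))
    (hxbar_mem : xbar ∈ Set.range (mulE Aᵀ))
    (hxbar_normal : mulE Aᵀ (mulE A xbar) = mulE Aᵀ b)
    -- `σ_min(A)`: the smallest nonzero singular value of `A`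
    (σmin : ℝ) (hσ_pos : 0 < σmin)
    (hσ_lb : ∀ z ∈ Set.range (mulE Aᵀ), σmin * ‖z‖ ≤ ‖mulE A z‖)
    (hσ_att : ∃ z ∈ Set.range (mulE Aᵀ), z ≠ 0 ∧ ‖mulE A z‖ = σmin * ‖z‖)
    -- `nA = ‖A‖₂`: the spectral norm of `A`
    (nA : ℝ) (hnA_ub : ∀ z, ‖mulE A z‖ ≤ nA * ‖z‖)
    (hnA_att : ∃ z : EuclideanSpace ℝ (Fin n), z ≠ 0 ∧ ‖mulE A z‖ = nA * ‖z‖)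
    -- the current iterate satisfies `x − x̄ ∈ Range(Aᵀ)`
    (hx : x - xbar ∈ Set.range (mulE Aᵀ)) :
    ∑ i, ‖rowE A i‖ ^ 2 / frobSq A * ‖mulE A (rkasStep A b x i) - mulE A xbar‖ ^ 2
      ≤ (1 - σmin ^ 4 / (nA ^ 2 * frobSq A)) * ‖mulE A x - mulE A xbar‖ ^ 2 := by
  classical
  set e : EuclideanSpace ℝ (Fin n) := x - xbar with he
  set r : EuclideanSpace ℝ (Fin m) := mulE A x - mulE A xbar with hr
  have hre : mulE A e = r := map_sub (Matrix.toEuclideanLin A) x xbar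
  have ha_ne : ∀ i, rowE A i ≠ 0 := by
    intro i h
    exact hrows i (funext fun j => by rw [← rowE_apply A i j, h]; rfl)
  have ha_pos : ∀ i, (0:ℝ) < ‖rowE A i‖ := fun i => norm_pos_iff.mpr (ha_ne i)
  have hu_pos : ∀ i, (0:ℝ) < ‖mulE A (rowE A i)‖ := fun i =>
    lt_of_lt_of_le (mul_pos hσ_pos (ha_pos i)) (hσ_lb _ (rowE_mem A i))
  have hm : Nonempty (Fin m) := by
    by_contra hne
    exact hA (by ext i j; exact absurd ⟨i⟩ hne)
  obtain ⟨i0⟩ := hm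
  have hnA_pos : 0 < nA := by
    have h1 := hu_pos i0
    have h2 := hnA_ub (rowE A i0)
    have h3 := ha_pos i0
    nlinarith
  have hF_pos : 0 < frobSq A := by
    rw [frobSq_eq]
    exact Finset.sum_pos' (fun j _ => by positivity)
      ⟨i0, Finset.mem_univ i0, pow_pos (ha_pos i0) 2⟩
  -- key per-row identity
  have key : ∀ i, ‖mulE A (rkasStep A b x i) - mulE A xbar‖ ^ 2
      = ‖r‖ ^ 2 - ⟪mulE A (rowE A i), r⟫ ^ 2 / ‖mulE A (rowE A i)‖ ^ 2 := by
    intro i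
    have h0 : mulE Aᵀ (mulE A xbar - b) = 0 := by
      have h4 : mulE Aᵀ (mulE A xbar - b) = mulE Aᵀ (mulE A xbar) - mulE Aᵀ b :=
        map_sub (Matrix.toEuclideanLin Aᵀ) _ _
      rw [h4, hxbar_normal, sub_self]
    have hc : ⟪mulE A (rowE A i), mulE A x - b⟫ = ⟪mulE A (rowE A i), r⟫ := by
      have hsplit : mulE A x - b = r + (mulE A xbar - b) := by rw [hr]; abel
      have hz : ⟪mulE A (rowE A i), mulE A xbar - b⟫ = (0:ℝ) := by
        rw [mulE_adj, h0, inner_zero_right]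
      rw [hsplit, inner_add_right, hz, add_zero]
    have hvec : mulE A (rkasStep A b x i) - mulE A xbar
        = r - (⟪mulE A (rowE A i), r⟫ / ‖mulE A (rowE A i)‖ ^ 2) • mulE A (rowE A i) := by
      have h4 := mulE_sub_smul A
        (⟪mulE A (rowE A i), mulE A x - b⟫ / ‖mulE A (rowE A i)‖ ^ 2) x (rowE A i)
      rw [show rkasStep A b x i
          = x - (⟪mulE A (rowE A i), mulE A x - b⟫ / ‖mulE A (rowE A i)‖ ^ 2) • rowE A i
          from rfl, h4, hc, hr]
      abel
    rw [hvec, norm_sub_sq_real, real_inner_smul_right, norm_smul, real_inner_comm]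
    have hne : ‖mulE A (rowE A i)‖ ≠ 0 := (hu_pos i).ne'
    rw [Real.norm_eq_abs, mul_pow, sq_abs]
    field_simp
    ring
  -- sum of squared inner products equals ‖A Aᵀ r‖²
  have hS : ∑ i, ⟪mulE A (rowE A i), r⟫ ^ 2 = ‖mulE A (mulE Aᵀ r)‖ ^ 2 := by
    rw [norm_sq_eq_sum]
    exact Finset.sum_congr rfl fun i _ => by rw [mulE_adj, inner_rowE]
  -- σmin bounds
  have h1 : σmin * ‖r‖ ≤ ‖mulE Aᵀ r‖ := by
    by_cases hr0 : r = 0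
    · simp [hr0, show mulE Aᵀ (0 : EuclideanSpace ℝ (Fin m)) = 0 from
        map_zero (Matrix.toEuclideanLin Aᵀ)]
    · have hrpos : 0 < ‖r‖ := norm_pos_iff.mpr hr0
      have hee : σmin * ‖e‖ ≤ ‖r‖ := hre ▸ hσ_lb e hx
      have hcs : ‖r‖ ^ 2 = ⟪e, mulE Aᵀ r⟫ := by
        rw [← mulE_adj, hre, real_inner_self_eq_norm_sq]
      have hcs2 : ⟪e, mulE Aᵀ r⟫ ≤ ‖e‖ * ‖mulE Aᵀ r‖ := real_inner_le_norm _ _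
      have hn1 : (0:ℝ) ≤ ‖e‖ := norm_nonneg _
      have hn2 : (0:ℝ) ≤ ‖mulE Aᵀ r‖ := norm_nonneg _
      nlinarith
  have h2 : σmin * ‖mulE Aᵀ r‖ ≤ ‖mulE A (mulE Aᵀ r)‖ := hσ_lb _ ⟨r, rfl⟩
  have h3 : σmin ^ 2 * ‖r‖ ≤ ‖mulE A (mulE Aᵀ r)‖ := by nlinarith [norm_nonneg r]
  have hS_lb : σmin ^ 4 * ‖r‖ ^ 2 ≤ ∑ i, ⟪mulE A (rowE A i), r⟫ ^ 2 := by
    rw [hS]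
    nlinarith [mul_le_mul h3 h3 (by positivity : (0:ℝ) ≤ σmin ^ 2 * ‖r‖)
      (norm_nonneg (mulE A (mulE Aᵀ r)))]
  have hsum1 : ∑ i, ‖rowE A i‖ ^ 2 / frobSq A = 1 := by
    rw [← Finset.sum_div, ← frobSq_eq, div_self hF_pos.ne']
  calc ∑ i, ‖rowE A i‖ ^ 2 / frobSq A * ‖mulE A (rkasStep A b x i) - mulE A xbar‖ ^ 2
      = ∑ i, ‖rowE A i‖ ^ 2 / frobSq A
          * (‖r‖ ^ 2 - ⟪mulE A (rowE A i), r⟫ ^ 2 / ‖mulE A (rowE A i)‖ ^ 2) :=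
        Finset.sum_congr rfl fun i _ => by rw [key i]
    _ = ‖r‖ ^ 2 - ∑ i, ‖rowE A i‖ ^ 2 / frobSq A
          * (⟪mulE A (rowE A i), r⟫ ^ 2 / ‖mulE A (rowE A i)‖ ^ 2) := by
        simp only [mul_sub]
        rw [Finset.sum_sub_distrib, ← Finset.sum_mul, hsum1, one_mul]
    _ ≤ ‖r‖ ^ 2 - ∑ i, ⟪mulE A (rowE A i), r⟫ ^ 2 / (nA ^ 2 * frobSq A) := by
        refine sub_le_sub_left (Finset.sum_le_sum fun i _ => ?_) _
        have hub : ‖mulE A (rowE A i)‖ ^ 2 ≤ nA ^ 2 * ‖rowE A i‖ ^ 2 := by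
          have := hnA_ub (rowE A i)
          nlinarith [norm_nonneg (mulE A (rowE A i)), norm_nonneg (rowE A i)]
        rw [div_mul_div_comm, div_le_div_iff₀ (mul_pos (pow_pos hnA_pos 2) hF_pos) (mul_pos hF_pos (pow_pos (hu_pos i) 2))]
        nlinarith [mul_le_mul_of_nonneg_left hub
          (mul_nonneg (sq_nonneg (⟪mulE A (rowE A i), r⟫)) hF_pos.le),
          sq_nonneg (⟪mulE A (rowE A i), r⟫)]
    _ = ‖r‖ ^ 2 - (∑ i, ⟪mulE A (rowE A i), r⟫ ^ 2) / (nA ^ 2 * frobSq A) := by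
        rw [← Finset.sum_div]
    _ ≤ ‖r‖ ^ 2 - σmin ^ 4 * ‖r‖ ^ 2 / (nA ^ 2 * frobSq A) :=
        sub_le_sub_left (div_le_div_of_nonneg_right hS_lb (by positivity)) _
    _ = (1 - σmin ^ 4 / (nA ^ 2 * frobSq A)) * ‖r‖ ^ 2 := by ring
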